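/- arXiv:2410.17730 — 5 statements merged into one kernel-verified Lean document; each statement's English description precedes it below -/
import Mathlib

section
/- The formal power series F = I_{a,ξ}(x^{1/5}, q) satisfies the q-difference equation [∏_{k=0}^{4} (1 − q^{−k+5x∂_x+a}) − x (1 − ξ q^{(a+1)/5 + x∂_x})^5] F = 0. Explicitly, as an identity in ℂ[[X]]: (∏_{k=0}^{4} (id − p^{5(a−k)} R_{q^5})) F = X · ((id − ξ p^{a+1} R_q)^5 F), where the five commuting ℂ-linear operators id − p^{5(a−k)} R_{q^5} (k = 0,…,4) are composed. -/
set_option maxHeartbeats 1000000 in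
/-- Fix `p ≠ 0` not a root of unity, `q = p^5`, `ξ` a fifth root of unity, and
`0 ≤ a ≤ 4`.  The component `F = I_{a,ξ}(x^{1/5}, q)` of the K-theoretic FJRW
`I`-function of the quintic singularity, i.e. the formal power series with
coefficients
`c_d = (∏_{k=0}^{d−1} (1 − ξ p^{a+1+5k})^5) / (∏_{k=1}^{5d+a} (1 − q^k))`,
satisfies the q-difference equation
`(∏_{k=0}^{4} (id − p^{5(a−k)} R_{q^5})) F = X · ((id − ξ p^{a+1} R_q)^5 F)`,
where `R_c` is the rescaling operator `X ↦ cX`. -/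
theorem quintic_I_function_q_difference
    (p : ℂ) (hp : p ≠ 0) (hproot : ∀ n : ℕ, n ≠ 0 → p ^ n ≠ 1)
    (q : ℂ) (hq : q = p ^ 5)
    (ξ : ℂ) (hξ : ξ ^ 5 = 1)
    (a : ℕ) (ha : a ≤ 4)
    (F : PowerSeries ℂ)
    (hF : F = PowerSeries.mk fun d =>
      (∏ k ∈ Finset.range d, (1 - ξ * p ^ (a + 1 + 5 * k)) ^ 5) /
      (∏ k ∈ Finset.range (5 * d + a), (1 - q ^ (k + 1))))
    -- the five commuting operators `L k = id − p^{5(a−k)} R_{q^5}`, k = 0,…,4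
    (L : ℕ → PowerSeries ℂ → PowerSeries ℂ)
    (hL : ∀ (k : ℕ) (f : PowerSeries ℂ),
      L k f = f - p ^ (5 * ((a : ℤ) - (k : ℤ))) • PowerSeries.rescale (q ^ 5) f)
    -- the operator `B = id − ξ p^{a+1} R_q`
    (B : PowerSeries ℂ → PowerSeries ℂ)
    (hB : ∀ f : PowerSeries ℂ,
      B f = f - (ξ * p ^ (a + 1)) • PowerSeries.rescale q f) :
    L 0 (L 1 (L 2 (L 3 (L 4 F)))) = PowerSeries.X * B (B (B (B (B F)))) := by
  subst hq
  have hq5 : ∀ k : ℕ, (1 : ℂ) - (p ^ 5) ^ (k + 1) ≠ 0 := by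
    intro k
    rw [← pow_mul]
    exact sub_ne_zero_of_ne fun h => hproot (5 * (k + 1)) (by omega) h.symm
  have hD : ∀ n : ℕ, (∏ k ∈ Finset.range n, ((1:ℂ) - (p ^ 5) ^ (k + 1))) ≠ 0 := by
    intro n
    exact Finset.prod_ne_zero_iff.mpr fun k _ => hq5 k
  have hcL : ∀ (k n : ℕ) (f : PowerSeries ℂ),
      PowerSeries.coeff n (L k f)
        = (1 - p ^ (5 * ((a : ℤ) - (k : ℤ))) * ((p ^ 5) ^ 5) ^ n) * PowerSeries.coeff n f := by
    intro k n f
    rw [hL]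
    simp [PowerSeries.coeff_rescale, smul_eq_mul]
    ring
  have hcB : ∀ (n : ℕ) (f : PowerSeries ℂ),
      PowerSeries.coeff n (B f)
        = (1 - ξ * p ^ (a + 1) * (p ^ 5) ^ n) * PowerSeries.coeff n f := by
    intro n f
    rw [hB]
    simp [PowerSeries.coeff_rescale, smul_eq_mul]
    ring
  ext n
  simp only [hcL]
  cases n with
  | zero =>
    have hX : PowerSeries.coeff 0 (PowerSeries.X * B (B (B (B (B F))))) = 0 := by
      simp
    rw [hX]
    interval_cases a <;> norm_num
  | succ m =>
    rw [PowerSeries.coeff_succ_X_mul]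
    simp only [hcB, hF, PowerSeries.coeff_mk]
    have key : ∀ (k c : ℕ), (5 * ((a : ℤ) - (k : ℤ))) + 25 * ((m : ℤ) + 1) = 5 * (5 * m + a) + c →
        p ^ (5 * ((a : ℤ) - (k : ℤ))) * ((p ^ 5) ^ 5) ^ (m + 1) = p ^ (5 * (5 * m + a) + c) := by
      intro k c h
      rw [← pow_mul, ← pow_mul, ← zpow_natCast p (5 * (5 * (m + 1))), ← zpow_add₀ hp,
        ← zpow_natCast p (5 * (5 * m + a) + c)]
      congr 1
      push_cast
      push_cast at h
      linarith
    rw [key 0 25 (by push_cast; ring), key 1 20 (by push_cast; ring),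
      key 2 15 (by push_cast; ring), key 3 10 (by push_cast; ring),
      key 4 5 (by push_cast; ring)]
    have hb : 5 * (m + 1) + a = (5 * m + a) + 1 + 1 + 1 + 1 + 1 := by ring
    rw [hb]
    simp only [Finset.prod_range_succ]
    simp only [mul_div_assoc']
    rw [div_eq_div_iff (by
        refine mul_ne_zero (mul_ne_zero (mul_ne_zero (mul_ne_zero (mul_ne_zero (hD _) ?_) ?_) ?_) ?_) ?_ <;>
          exact hq5 _) (hD _)]
    ring
end

section
/- The formal power series F̃ = I_{a,ξ}(x^{1/5}, q^{−1}) satisfies (∏_{k=0}^{4} (id − p^{5(a−k)} R_{q^5})) F̃ = q^{14+4a} · X · R_{q^{20}} ((id − ξ^{−1} p^{a+1} R_q)^5 F̃) in ℂ[[X]]; equivalently, it is annihilated by the q-difference operator ∏_{k=0}^{4} (1 − q^{−k+5x∂_x+a}) − x q^{15+4a−1+20x∂_x} (1 − ξ^{−1} q^{(a+1)/5+x∂_x})^5. -/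
/-!
Compare coefficients, writing `Q = q = p⁵` and `m = 5n + a`. On `X^{n+1}` the left side multiplies
`c̃_{n+1}` by `∏_{j=1}^{5} (1 - Q^{m+j})`, while `c̃_{n+1} / c̃_n` has the new denominator factors
`1 - Q^{-(m+j)}`; since `1 - x = -x (1 - x⁻¹)`, these cancel up to `-Q^{5m+15}`. On the right,
`ξ⁵ = 1` gives `(1 - ξ⁻¹ p^{m+1})⁵ = -Q^{m+1} (1 - ξ p^{-(m+1)})⁵`, whose last factor is the new
numerator factor of `c̃_{n+1} / c̃_n`; with the prefactor `Q^{14+4a+20n} = Q^{4m+14}` both sides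
become `-Q^{5m+15} (1 - ξ p^{-(m+1)})⁵ c̃_n`. On `X⁰` the factor `L a` of the left side vanishes.
-/

open Finset

namespace PowerSeries

theorem coeff_sub_smul_rescale {R : Type*} [CommRing R] (c r : R) (f : PowerSeries R) (d : ℕ) :
    coeff d (f - c • rescale r f) = (1 - c * r ^ d) * coeff d f := by
  rw [map_sub, coeff_smul, coeff_rescale, smul_eq_mul]
  ring

end PowerSeries

section Field

variable {K : Type*} [Field K]

theorem one_sub_eq_neg_mul_one_sub_inv {x : K} (hx : x ≠ 0) : 1 - x = -x * (1 - x⁻¹) := by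
  rw [mul_sub, mul_one, neg_mul, mul_inv_cancel₀ hx]
  ring

theorem one_sub_inv_mul_pow_of_pow_eq_one {ξ x : K} {n : ℕ} (hξ : ξ ^ n = 1) (hx : x ≠ 0) :
    (1 - ξ⁻¹ * x) ^ n = (-x) ^ n * (1 - ξ * x⁻¹) ^ n := by
  rcases eq_or_ne ξ 0 with rfl | hξ0
  · obtain rfl : n = 0 := zero_pow_eq_one₀.mp hξ
    simp
  rw [one_sub_eq_neg_mul_one_sub_inv (mul_ne_zero (inv_ne_zero hξ0) hx), mul_inv, inv_inv,
    ← mul_neg, mul_pow, mul_pow, inv_pow, hξ, inv_one, one_mul]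

theorem prod_one_sub_eq_prod_neg_mul_prod_one_sub_inv {ι : Type*} (s : Finset ι) {x : ι → K}
    (hx : ∀ i ∈ s, x i ≠ 0) :
    ∏ i ∈ s, (1 - x i) = (∏ i ∈ s, -x i) * ∏ i ∈ s, (1 - (x i)⁻¹) := by
  rw [← prod_mul_distrib]
  exact prod_congr rfl fun i hi => one_sub_eq_neg_mul_one_sub_inv (hx i hi)

section QuinticCoefficients

variable (p ξ : K) (a : ℕ)

/-- The coefficient `c̃_d` of `F̃`, with the negative powers written as inverses. -/
def quinticCoeff (d : ℕ) : K :=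
  (∏ k ∈ range d, (1 - ξ * (p ^ (a + 1 + 5 * k))⁻¹) ^ 5) /
    ∏ k ∈ range (5 * d + a), (1 - ((p ^ 5) ^ (k + 1))⁻¹)

theorem quinticCoeff_eq_zpow (d : ℕ) :
    quinticCoeff p ξ a d =
      (∏ k ∈ range d, (1 - ξ * p ^ (-((a : ℤ) + 1 + 5 * (k : ℤ)))) ^ 5) /
        ∏ k ∈ range (5 * d + a), (1 - (p ^ 5) ^ (-((k : ℤ) + 1))) := by
  simp only [quinticCoeff, zpow_neg]
  norm_cast

theorem quinticCoeff_succ (n : ℕ) :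
    quinticCoeff p ξ a (n + 1) =
      quinticCoeff p ξ a n * (1 - ξ * (p ^ (a + 1 + 5 * n))⁻¹) ^ 5 /
        ∏ j ∈ range 5, (1 - ((p ^ 5) ^ (5 * n + a + j + 1))⁻¹) := by
  rw [quinticCoeff, quinticCoeff, prod_range_succ, show 5 * (n + 1) + a = 5 * n + a + 5 by ring,
    prod_range_add, mul_div_mul_comm, mul_div_assoc]

theorem zpow_mul_pow_succ_eq_pow (hp : p ≠ 0) {k : ℕ} (hk : k ≤ 4) (n : ℕ) :
    p ^ (5 * ((a : ℤ) - k)) * ((p ^ 5) ^ 5) ^ (n + 1) = (p ^ 5) ^ (5 * n + a + (4 - k) + 1) := by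
  have hexp : 5 * ((a : ℤ) - k) + ((5 * (5 * (n + 1)) : ℕ) : ℤ) =
      ((5 * (5 * n + a + (4 - k) + 1) : ℕ) : ℤ) := by
    push_cast [hk]
    ring
  rw [← pow_mul, ← pow_mul, ← pow_mul, ← zpow_natCast, ← zpow_natCast p, ← zpow_add₀ hp, hexp]

theorem prod_one_sub_mul_quinticCoeff_succ (hp : p ≠ 0) (hξ : ξ ^ 5 = 1)
    (hroot : ∀ n : ℕ, n ≠ 0 → p ^ n ≠ 1) (n : ℕ) :
    (∏ j ∈ range 5, (1 - (p ^ 5) ^ (5 * n + a + j + 1))) * quinticCoeff p ξ a (n + 1) =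
      (p ^ 5) ^ (14 + 4 * a) *
        (((p ^ 5) ^ 20) ^ n * ((1 - ξ⁻¹ * p ^ (a + 1 + 5 * n)) ^ 5 * quinticCoeff p ξ a n)) := by
  have hden : ∏ j ∈ range 5, (1 - ((p ^ 5) ^ (5 * n + a + j + 1))⁻¹) ≠ 0 := by
    refine prod_ne_zero_iff.mpr fun j _ h => hroot (5 * (5 * n + a + j + 1)) (by positivity) ?_
    rw [pow_mul, ← inv_eq_one, ← sub_eq_zero, ← neg_sub, h, neg_zero]
  rw [prod_one_sub_eq_prod_neg_mul_prod_one_sub_inv _ fun j _ => by positivity,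
    quinticCoeff_succ, one_sub_inv_mul_pow_of_pow_eq_one hξ (pow_ne_zero _ hp),
    mul_comm (quinticCoeff p ξ a n), mul_assoc, mul_div_cancel₀ _ hden]
  simp only [prod_range_succ, prod_range_zero]
  ring

end QuinticCoefficients

end Field

open PowerSeries in
/-- Fix `p ≠ 0` not a root of unity, `q = p^5`, `ξ` a fifth root of unity, and
`0 ≤ a ≤ 4`.  The series `F̃ = I_{a,ξ}(x^{1/5}, q^{−1})`, i.e. the formal power
series with coefficients
`c̃_d = (∏_{k=0}^{d−1} (1 − ξ p^{−(a+1+5k)})^5) / (∏_{k=1}^{5d+a} (1 − q^{−k}))`,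
satisfies
`(∏_{k=0}^{4} (id − p^{5(a−k)} R_{q^5})) F̃
  = q^{14+4a} · X · R_{q^{20}} ((id − ξ^{−1} p^{a+1} R_q)^5 F̃)`,
where `R_c` is the rescaling operator `X ↦ cX`; equivalently `F̃` is annihilated
by `∏_{k=0}^{4} (1 − q^{−k+5x∂_x+a}) − x q^{15+4a−1+20x∂_x} (1 − ξ^{−1} q^{(a+1)/5+x∂_x})^5`. -/
theorem quintic_I_function_q_inverse_difference
    (p : ℂ) (hp : p ≠ 0) (hproot : ∀ n : ℕ, n ≠ 0 → p ^ n ≠ 1)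
    (q : ℂ) (hq : q = p ^ 5)
    (ξ : ℂ) (hξ : ξ ^ 5 = 1)
    (a : ℕ) (ha : a ≤ 4)
    (F : PowerSeries ℂ)
    (hF : F = PowerSeries.mk fun d =>
      (∏ k ∈ Finset.range d, (1 - ξ * p ^ (-((a : ℤ) + 1 + 5 * (k : ℤ)))) ^ 5) /
      (∏ k ∈ Finset.range (5 * d + a), (1 - q ^ (-((k : ℤ) + 1)))))
    -- the five commuting operators `L k = id − p^{5(a−k)} R_{q^5}`, k = 0,…,4
    (L : ℕ → PowerSeries ℂ → PowerSeries ℂ)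
    (hL : ∀ (k : ℕ) (f : PowerSeries ℂ),
      L k f = f - p ^ (5 * ((a : ℤ) - (k : ℤ))) • PowerSeries.rescale (q ^ 5) f)
    -- the operator `B = id − ξ⁻¹ p^{a+1} R_q`
    (B : PowerSeries ℂ → PowerSeries ℂ)
    (hB : ∀ f : PowerSeries ℂ,
      B f = f - (ξ⁻¹ * p ^ (a + 1)) • PowerSeries.rescale q f) :
    L 0 (L 1 (L 2 (L 3 (L 4 F)))) =
      q ^ (14 + 4 * a) •
        (PowerSeries.X * PowerSeries.rescale (q ^ 20) (B (B (B (B (B F)))))) := by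
  subst hq
  have hcoeff (d : ℕ) : coeff d F = quinticCoeff p ξ a d := by
    rw [hF, coeff_mk, quinticCoeff_eq_zpow]
  ext (_ | n)
  · simp only [hL, coeff_sub_smul_rescale, coeff_smul, coeff_zero_X_mul, smul_zero, pow_zero,
      mul_one]
    interval_cases a <;> simp
  have hlhs : coeff (n + 1) (L 0 (L 1 (L 2 (L 3 (L 4 F))))) =
      (∏ j ∈ range 5, (1 - (p ^ 5) ^ (5 * n + a + j + 1))) * quinticCoeff p ξ a (n + 1) := by
    simp only [hL, coeff_sub_smul_rescale, hcoeff, prod_range_succ, prod_range_zero,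
      zpow_mul_pow_succ_eq_pow p a hp, Nat.reduceLeDiff, Nat.reduceSub]
    ring
  have hB5 : coeff n (B (B (B (B (B F))))) =
      (1 - ξ⁻¹ * p ^ (a + 1 + 5 * n)) ^ 5 * quinticCoeff p ξ a n := by
    simp only [hB, coeff_sub_smul_rescale, hcoeff]
    ring
  rw [hlhs, coeff_smul, coeff_succ_X_mul, coeff_rescale, hB5, smul_eq_mul]
  exact prod_one_sub_mul_quinticCoeff_succ p ξ a hp hξ hproot n
end

section
/- For every integer k ≥ 1: if m does not divide k then tr(G^k) = 0, and if k = m·s with s ≥ 1 then tr(G^k) = m · tr(g^s). -/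
open LinearMap

section CyclicAux

set_option linter.unusedSectionVars false

variable {K : Type*} [Field K] {V : Type*} [AddCommGroup V] [Module K V]
  {m : ℕ} [NeZero m]

/-- Composition of `k` consecutive blocks ending just below index `j`:
`p g k j = g (j-1) * g (j-2) * ⋯ * g (j-k)`. -/
def cyclicP (g : ZMod m → Module.End K V) : ℕ → ZMod m → Module.End K V
  | 0, _ => 1
  | (k + 1), j => g (j - 1) * cyclicP g k (j - 1)

lemma cyclicP_add (g : ZMod m → Module.End K V) (a b : ℕ) (j : ZMod m) :
    cyclicP g (a + b) j = cyclicP g a j * cyclicP g b (j - (a : ℕ)) := by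
  induction a generalizing j with
  | zero => simp [cyclicP]
  | succ a ih =>
    have h : a + 1 + b = (a + b) + 1 := by ring
    rw [h]
    show g (j - 1) * cyclicP g (a + b) (j - 1) = _
    rw [ih]
    show g (j - 1) * (cyclicP g a (j - 1) * cyclicP g b (j - 1 - (a : ℕ))) = _
    rw [show cyclicP g (a + 1) j = g (j - 1) * cyclicP g a (j - 1) from rfl,
      mul_assoc]
    congr 2
    push_cast
    ring_nf

lemma cyclicP_mul (g : ZMod m → Module.End K V) (s : ℕ) (j : ZMod m) :
    cyclicP g (m * s) j = (cyclicP g m j) ^ s := by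
  induction s with
  | zero => simp [cyclicP]
  | succ s ih =>
    have h : m * (s + 1) = m + m * s := by ring
    rw [h, cyclicP_add, ZMod.natCast_self, sub_zero, ih, pow_succ']

lemma trace_mul_pow_comm [FiniteDimensional K V] (A B : Module.End K V) (s : ℕ) :
    trace K V ((A * B) ^ s) = trace K V ((B * A) ^ s) := by
  cases s with
  | zero => rfl
  | succ s =>
    have h1 : (A * B) ^ (s + 1) = A * ((B * A) ^ s * B) := by
      induction s with
      | zero => simp [pow_succ, mul_assoc]
      | succ s ih =>
        rw [pow_succ, ih, show (B * A) ^ (s + 1) = (B * A) ^ s * (B * A) from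
          pow_succ _ _]
        noncomm_ring
    rw [h1, LinearMap.trace_mul_comm, mul_assoc, ← pow_succ]

lemma cyclicP_m_split (g : ZMod m → Module.End K V) (j : ZMod m) :
    cyclicP g m (j + 1) = g j * cyclicP g (m - 1) j ∧
      cyclicP g m j = cyclicP g (m - 1) j * g j := by
  have h0 : m ≠ 0 := NeZero.ne m
  constructor
  · have e1 : cyclicP g m (j + 1) = cyclicP g (1 + (m - 1)) (j + 1) := by
      congr 1; omega
    rw [e1, cyclicP_add]
    show (g (j + 1 - 1) * 1) * cyclicP g (m - 1) (j + 1 - ((1 : ℕ) : ZMod m)) = _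
    simp
  · have e1 : cyclicP g m j = cyclicP g ((m - 1) + 1) j := by
      congr 1; omega
    rw [e1, cyclicP_add]
    show cyclicP g (m - 1) j * (g (j - ((m - 1 : ℕ) : ZMod m) - 1) * 1) = _
    have e2 : j - ((m - 1 : ℕ) : ZMod m) - 1 = j := by
      have e3 : (((m - 1 : ℕ) : ZMod m)) + 1 = 0 := by
        rw [← Nat.cast_add_one, show m - 1 + 1 = m from by omega,
          ZMod.natCast_self]
      rw [sub_sub, e3, sub_zero]
    rw [e2, mul_one]

lemma trace_cyclicP_indep [FiniteDimensional K V] (g : ZMod m → Module.End K V)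
    (s : ℕ) (j : ZMod m) :
    trace K V ((cyclicP g m j) ^ s) = trace K V ((cyclicP g m 0) ^ s) := by
  suffices h : ∀ n : ℕ, trace K V ((cyclicP g m ((n : ℕ) : ZMod m)) ^ s)
      = trace K V ((cyclicP g m 0) ^ s) by
    have := h j.val
    rwa [ZMod.natCast_rightInverse j] at this
  intro n
  induction n with
  | zero => simp
  | succ n ih =>
    have h1 := (cyclicP_m_split g ((n : ℕ) : ZMod m)).1
    have h2 := (cyclicP_m_split g ((n : ℕ) : ZMod m)).2
    push_cast
    rw [h1, trace_mul_pow_comm, ← h2, ih]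

lemma cyclicP_eq_list_prod (g : ZMod m → Module.End K V) (k : ℕ) :
    cyclicP g k ((k : ℕ) : ZMod m)
      = (((List.range k).reverse.map fun i : ℕ => g ((i : ℕ) : ZMod m)).prod) := by
  induction k with
  | zero => simp [cyclicP]
  | succ k ih =>
    rw [List.range_succ, List.reverse_append]
    simp only [List.reverse_singleton, List.singleton_append, List.map_cons,
      List.prod_cons]
    rw [← ih]
    show g (((k + 1 : ℕ) : ZMod m) - 1) * cyclicP g k (((k + 1 : ℕ) : ZMod m) - 1) = _
    have h : ((k + 1 : ℕ) : ZMod m) - 1 = ((k : ℕ) : ZMod m) := by push_cast; ring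
    rw [h]

lemma G_pow_apply (g : ZMod m → Module.End K V) (G : Module.End K (ZMod m → V))
    (hG : ∀ (v : ZMod m → V) (i : ZMod m), G v (i + 1) = g i (v i))
    (k : ℕ) (v : ZMod m → V) (j : ZMod m) :
    (G ^ k) v j = cyclicP g k j (v (j - (k : ℕ))) := by
  induction k generalizing v j with
  | zero => simp [cyclicP]
  | succ k ih =>
    rw [pow_succ']
    have hGj : ∀ w : ZMod m → V, G w j = g (j - 1) (w (j - 1)) := by
      intro w
      have := hG w (j - 1)
      rwa [sub_add_cancel] at this
    show G ((G ^ k) v) j = _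
    rw [hGj, ih]
    show g (j - 1) (cyclicP g k (j - 1) (v (j - 1 - (k : ℕ)))) = _
    have harg : j - 1 - ((k : ℕ) : ZMod m) = j - ((k + 1 : ℕ) : ZMod m) := by
      push_cast; ring
    rw [harg]
    rfl

lemma trace_G_pow [FiniteDimensional K V] (g : ZMod m → Module.End K V)
    (G : Module.End K (ZMod m → V))
    (hG : ∀ (v : ZMod m → V) (i : ZMod m), G v (i + 1) = g i (v i)) (k : ℕ) :
    trace K (ZMod m → V) (G ^ k)
      = ∑ j : ZMod m, if j - ((k : ℕ) : ZMod m) = j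
          then trace K V (cyclicP g k j) else 0 := by
  have hdecomp : (G ^ k)
      = ∑ j : ZMod m, (LinearMap.single K (fun _ : ZMod m => V) j) ∘ₗ
          ((cyclicP g k j : V →ₗ[K] V) ∘ₗ LinearMap.proj (j - (k : ℕ))) := by
    refine LinearMap.ext fun v => funext fun j => ?_
    rw [G_pow_apply g G hG k v j]
    simp only [LinearMap.coe_sum, Finset.sum_apply, LinearMap.comp_apply,
      LinearMap.single_apply, LinearMap.proj_apply]
    rw [Finset.sum_eq_single j]
    · simp
    · intro b _ hb
      exact Pi.single_eq_of_ne (Ne.symm hb) _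
    · intro h; exact absurd (Finset.mem_univ j) h
  rw [hdecomp, map_sum]
  refine Finset.sum_congr rfl fun j _ => ?_
  rw [LinearMap.trace_comp_comm', LinearMap.comp_assoc]
  by_cases h : j - ((k : ℕ) : ZMod m) = j
  · rw [if_pos h]
    congr 1
    have he : (LinearMap.proj (j - ((k : ℕ) : ZMod m)) ∘ₗ
        LinearMap.single K (fun _ : ZMod m => V) j) = LinearMap.id := by
      ext x
      simp [h]
    rw [he, LinearMap.comp_id]
  · rw [if_neg h]
    have he : (LinearMap.proj (j - ((k : ℕ) : ZMod m)) ∘ₗ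
        LinearMap.single K (fun _ : ZMod m => V) j) = 0 := by
      ext x
      simp [Pi.single_eq_of_ne h]
    rw [he, LinearMap.comp_zero, map_zero]

end CyclicAux

/-- Let `V` be a finite-dimensional vector space over a field `K`, `m ≥ 1`,
`g_0, …, g_{m−1} ∈ End_K(V)`, and let `G` be the cyclic block endomorphism of
`W = ⊕_{i ∈ ℤ/m} V` given by `(G v)_{i+1} = g_i(v_i)`.  Set
`g = g_{m−1} ∘ ⋯ ∘ g_0`.  Then for every `k ≥ 1`: if `m ∤ k` then
`tr(G^k) = 0`, and `tr(G^{m·s}) = m · tr(g^s)` for every `s ≥ 1`. -/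
theorem trace_cyclic_block_power
    (K : Type*) [Field K] (V : Type*) [AddCommGroup V] [Module K V]
    [FiniteDimensional K V] (m : ℕ) [NeZero m]
    (g : ZMod m → Module.End K V)
    (G : Module.End K (ZMod m → V))
    (hG : ∀ (v : ZMod m → V) (i : ZMod m), G v (i + 1) = g i (v i)) :
    (∀ k : ℕ, 1 ≤ k → ¬ (m ∣ k) →
      LinearMap.trace K (ZMod m → V) (G ^ k) = 0) ∧
    (∀ s : ℕ, 1 ≤ s →
      LinearMap.trace K (ZMod m → V) (G ^ (m * s)) =
        (m : K) * LinearMap.trace K V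
          ((((List.range m).reverse.map fun i => g (i : ZMod m)).prod) ^ s)) := by
  constructor
  · intro k _ hk
    rw [trace_G_pow g G hG k]
    refine Finset.sum_eq_zero fun j _ => ?_
    rw [if_neg]
    intro h
    exact hk ((ZMod.natCast_eq_zero_iff k m).mp (sub_eq_self.mp h))
  · intro s _
    rw [trace_G_pow g G hG (m * s)]
    have hz : (((m * s : ℕ) : ZMod m)) = 0 := by
      rw [ZMod.natCast_eq_zero_iff]
      exact Dvd.intro s rfl
    have hterm : ∀ j : ZMod m, (if j - ((m * s : ℕ) : ZMod m) = j
        then LinearMap.trace K V (cyclicP g (m * s) j) else 0)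
        = LinearMap.trace K V ((cyclicP g m 0) ^ s) := by
      intro j
      rw [if_pos (by rw [hz, sub_zero]), cyclicP_mul, trace_cyclicP_indep]
    rw [Finset.sum_congr rfl fun j _ => hterm j, Finset.sum_const]
    have hcard : (Finset.univ : Finset (ZMod m)).card = m := by
      simp [ZMod.card]
    rw [hcard, nsmul_eq_mul]
    have hL := cyclicP_eq_list_prod g m
    rw [ZMod.natCast_self] at hL
    rw [hL]
    simp only [List.pure_def, List.bind_eq_flatMap]
    rw [← List.map_eq_flatMap, List.map_map]
    rfl
end

section
/- For every scalar s ∈ K, det(id_W − s·G) = det(id_V − s^m·g). (This is the concrete form of the identity Tr(λ_{−s} E) = Ψ^m(Tr(λ_{−s} E_0)) for the cyclically permuted graded bundle.) -/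
open Polynomial in
lemma Matrix.det_one_add_of_isNilpotent_aux {n : Type*} [DecidableEq n] [Fintype n]
    {K : Type*} [Field K] {N : Matrix n n K} (h : IsNilpotent N) :
    (1 + N).det = 1 := by
  have hneg : IsNilpotent (-N) := h.neg
  have hc : (-N).charpoly = X ^ Fintype.card n :=
    sub_eq_zero.mp (Matrix.isNilpotent_charpoly_sub_pow_of_isNilpotent hneg).eq_zero
  have h1 : (1 + N) = (charmatrix (-N)).map (Polynomial.eval 1) := by
    ext i j
    by_cases hij : i = j
    · subst hij; simp [charmatrix_apply_eq]
    · simp [charmatrix_apply_ne _ _ _ hij, Matrix.one_apply_ne hij]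
  rw [h1, ← Polynomial.coe_evalRingHom, ← RingHom.mapMatrix_apply, ← RingHom.map_det]
  have h2 : (charmatrix (-N)).det = (-N).charpoly := rfl
  rw [h2, hc]
  simp

lemma LinearMap.det_one_add_of_isNilpotent_aux {K V : Type*} [Field K] [AddCommGroup V]
    [Module K V] [FiniteDimensional K V] {f : Module.End K V} (h : IsNilpotent f) :
    LinearMap.det (1 + f) = 1 := by
  classical
  let b := Module.finBasis K V
  have hN : IsNilpotent (LinearMap.toMatrix b b f) := by
    obtain ⟨k, hk⟩ := h
    refine ⟨k, ?_⟩
    have : (LinearMap.toMatrixAlgEquiv b f) ^ k = 0 := by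
      rw [← map_pow, hk, map_zero]
    simpa [LinearMap.toMatrixAlgEquiv] using this
  rw [← LinearMap.det_toMatrix b, map_add, LinearMap.toMatrix_one]
  exact Matrix.det_one_add_of_isNilpotent_aux hN

lemma LinearMap.det_prodMap_aux {K M₁ M₂ : Type*} [Field K] [AddCommGroup M₁] [Module K M₁]
    [AddCommGroup M₂] [Module K M₂] [FiniteDimensional K M₁] [FiniteDimensional K M₂]
    (f : Module.End K M₁) (h : Module.End K M₂) :
    LinearMap.det (f.prodMap h) = f.det * h.det := by
  rw [LinearMap.det_eq_sign_charpoly_coeff, LinearMap.det_eq_sign_charpoly_coeff,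
    LinearMap.det_eq_sign_charpoly_coeff, LinearMap.charpoly_prodMap, Module.finrank_prod,
    Polynomial.mul_coeff_zero, pow_add]
  ring

/-- Splitting off one coordinate of a pi type, as a linear equivalence. -/
def piSplitAux (R M ι : Type*) [Semiring R] [AddCommMonoid M] [Module R M]
    [DecidableEq ι] (i₀ : ι) : (ι → M) ≃ₗ[R] M × ({ i : ι // i ≠ i₀ } → M) where
  toFun v := (v i₀, fun j => v j.1)
  map_add' _ _ := rfl
  map_smul' _ _ := rfl
  invFun x i := if h : i = i₀ then x.1 else x.2 ⟨i, h⟩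
  left_inv v := by
    funext i
    by_cases h : i = i₀ <;> simp [h]
  right_inv x := by
    refine Prod.ext (by simp) ?_
    funext j
    simp [j.2]


/-- Let `V` be a finite-dimensional vector space over a field `K`, `m ≥ 1`,
`g_0, …, g_{m−1} ∈ End_K(V)`, and let `G` be the cyclic block endomorphism of
`W = ⊕_{i ∈ ℤ/m} V` given by `(G v)_{i+1} = g_i(v_i)`.  Set
`g = g_{m−1} ∘ ⋯ ∘ g_0`.  Then for every scalar `s ∈ K`,
`det(id_W − s·G) = det(id_V − s^m·g)`.  (Concrete form of the identity
`Tr(λ_{−s} E) = Ψ^m(Tr(λ_{−s} E_0))`.) -/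
theorem det_one_sub_smul_cyclic_block
    (K : Type*) [Field K] (V : Type*) [AddCommGroup V] [Module K V]
    [FiniteDimensional K V] (m : ℕ) [NeZero m]
    (g : ZMod m → Module.End K V)
    (G : Module.End K (ZMod m → V))
    (hG : ∀ (v : ZMod m → V) (i : ZMod m), G v (i + 1) = g i (v i)) :
    ∀ s : K,
      LinearMap.det ((1 : Module.End K (ZMod m → V)) - s • G) =
      LinearMap.det ((1 : Module.End K V) -
        s ^ m • (((List.range m).reverse.map fun i => g (i : ZMod m)).prod)) := by
  intro s
  classical
  have hm : 0 < m := Nat.pos_of_ne_zero (NeZero.ne m)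
  set q : ℕ → Module.End K V :=
    fun j => (((List.range (m - j)).map fun i : ℕ => g ((j + i : ℕ) : ZMod m)).reverse).prod
    with hq
  have hqm : q m = 1 := by simp [hq]
  have hqrec : ∀ j : ℕ, j < m → q j = q (j + 1) * g ((j : ℕ) : ZMod m) := by
    intro j hj
    have h1 : m - j = (m - (j + 1)) + 1 := by omega
    rw [hq]
    dsimp only
    rw [h1, List.range_succ_eq_map, List.map_cons, List.map_map, List.reverse_cons,
      List.prod_append, List.prod_cons, List.prod_nil, mul_one]
    have hfun : ((fun i : ℕ => g ((j + i : ℕ) : ZMod m)) ∘ Nat.succ)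
        = fun i : ℕ => g (((j + 1) + i : ℕ) : ZMod m) := by
      funext i
      simp only [Function.comp_apply]
      have : j + Nat.succ i = j + 1 + i := by omega
      rw [this]
    rw [hfun]
    norm_num
  have hq0 : q 0 = ((List.range m).reverse.map fun i : ℕ => g (i : ZMod m)).prod := by
    rw [hq]
    dsimp only
    rw [Nat.sub_zero, ← List.map_reverse]
    congr 1
    apply List.map_congr_left
    intro i _
    norm_num
  -- the big correction endomorphism pieces
  set Esum : (ZMod m → V) →ₗ[K] V :=
    ∑ j ∈ Finset.Ico 1 m, s ^ (m - j) •
      ((q j) ∘ₗ LinearMap.proj (R := K) (φ := fun _ : ZMod m => V) ((j : ℕ) : ZMod m))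
    with hEsum
  have hEsumApp : ∀ v : ZMod m → V,
      Esum v = ∑ j ∈ Finset.Ico 1 m, s ^ (m - j) • q j (v ((j : ℕ) : ZMod m)) := by
    intro v
    rw [hEsum]
    simp [LinearMap.sum_apply]
  set nE : Module.End K (ZMod m → V) :=
    LinearMap.pi fun i : ZMod m => if i = 0 then Esum else 0 with hnE
  have hnEApp : ∀ (v : ZMod m → V) (i : ZMod m),
      nE v i = if i = 0 then Esum v else 0 := by
    intro v i
    rw [hnE, LinearMap.pi_apply]
    by_cases h : i = 0 <;> simp [h]
  set N : Module.End K (ZMod m → V) :=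
    LinearMap.pi fun i : ZMod m => if i = 0 then 0 else
      s • ((g (i - 1)) ∘ₗ LinearMap.proj (R := K) (φ := fun _ : ZMod m => V) (i - 1)) with hN
  have hNApp : ∀ (v : ZMod m → V) (i : ZMod m),
      N v i = if i = 0 then 0 else s • g (i - 1) (v (i - 1)) := by
    intro v i
    rw [hN, LinearMap.pi_apply]
    by_cases h : i = 0 <;> simp [h]
  set d : Module.End K V := 1 - s ^ m • q 0 with hd
  set D : Module.End K (ZMod m → V) :=
    LinearMap.pi fun i : ZMod m => if i = 0 then
      d ∘ₗ LinearMap.proj (R := K) (φ := fun _ : ZMod m => V) 0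
      else LinearMap.proj i with hD
  have hDApp : ∀ (v : ZMod m → V) (i : ZMod m),
      D v i = if i = 0 then d (v 0) else v i := by
    intro v i
    rw [hD, LinearMap.pi_apply]
    by_cases h : i = 0 <;> simp [h]
  -- basic applications
  have hGApp : ∀ (v : ZMod m → V) (i : ZMod m), G v i = g (i - 1) (v (i - 1)) := by
    intro v i
    have h := hG v (i - 1)
    rwa [sub_add_cancel] at h
  have hcast : ∀ j : ℕ, 1 ≤ j → ((j - 1 : ℕ) : ZMod m) = ((j : ℕ) : ZMod m) - 1 := by
    intro j hj
    push_cast [Nat.cast_sub hj]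
    ring
  have hneg1 : ((m - 1 : ℕ) : ZMod m) = -1 := by
    rw [hcast m hm, ZMod.natCast_self, zero_sub]
  -- the key factorization
  have hkey : ((1 : Module.End K (ZMod m → V)) + nE) ∘ₗ
        ((1 : Module.End K (ZMod m → V)) - s • G)
      = D ∘ₗ ((1 : Module.End K (ZMod m → V)) - N) := by
    apply LinearMap.ext
    intro v
    funext i
    have hw : ∀ k : ZMod m,
        (((1 : Module.End K (ZMod m → V)) - s • G) v) k
          = v k - s • g (k - 1) (v (k - 1)) := by
      intro k
      simp [hGApp]
    have hu : ∀ k : ZMod m,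
        (((1 : Module.End K (ZMod m → V)) - N) v) k
          = v k - (if k = 0 then 0 else s • g (k - 1) (v (k - 1))) := by
      intro k
      simp [hNApp]
    have hLHS : (((1 : Module.End K (ZMod m → V)) + nE) ∘ₗ
          ((1 : Module.End K (ZMod m → V)) - s • G)) v i
        = (((1 : Module.End K (ZMod m → V)) - s • G) v) i
          + nE (((1 : Module.End K (ZMod m → V)) - s • G) v) i := by
      simp
    have hRHS : (D ∘ₗ ((1 : Module.End K (ZMod m → V)) - N)) v i
        = D (((1 : Module.End K (ZMod m → V)) - N) v) i := by
      simp
    rw [hLHS, hRHS]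
    by_cases hi : i = 0
    · subst hi
      rw [hDApp, if_pos rfl, hu, if_pos rfl, sub_zero]
      rw [hnEApp, if_pos rfl]
      rw [hEsumApp]
      set F : ℕ → V := fun k => s ^ (m - k) • q k (v ((k : ℕ) : ZMod m)) with hF
      have hterm : ∀ j ∈ Finset.Ico 1 m,
          s ^ (m - j) • q j ((((1 : Module.End K (ZMod m → V)) - s • G) v) ((j : ℕ) : ZMod m))
            = F j - F (j - 1) := by
        intro j hj
        obtain ⟨hj1, hj2⟩ := Finset.mem_Ico.mp hj
        have hj' : j - 1 + 1 = j := by omega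
        rw [hw, ← hcast j hj1, map_sub, map_smul, smul_sub]
        congr 1
        have hqj : q (j - 1) = q j * g ((j - 1 : ℕ) : ZMod m) := by
          rw [hqrec (j - 1) (by omega), hj']
        rw [hF]
        dsimp only
        rw [hqj, Module.End.mul_apply, smul_smul, ← pow_succ]
        have hexp : m - j + 1 = m - (j - 1) := by omega
        rw [hexp]
      rw [Finset.sum_congr rfl hterm]
      have htel : ∑ j ∈ Finset.Ico 1 m, (F j - F (j - 1)) = F (m - 1) - F 0 := by
        rw [Finset.sum_Ico_eq_sum_range]
        have : ∀ j ∈ Finset.range (m - 1), F (1 + j) - F (1 + j - 1) = F (j + 1) - F j := by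
          intro j _
          congr 1
          · congr 1
            omega
          · congr 1
            omega
        rw [Finset.sum_congr rfl this, Finset.sum_range_sub]
      rw [htel]
      have hFm1 : F (m - 1) = s • g (-1) (v (-1)) := by
        rw [hF]
        dsimp only
        have h1 : m - (m - 1) = 1 := by omega
        have h2 : q (m - 1) = g ((m - 1 : ℕ) : ZMod m) := by
          have hm1 : m - 1 + 1 = m := by omega
          rw [hqrec (m - 1) (by omega), hm1, hqm, one_mul]
        rw [h1, pow_one, h2, hneg1]
      have hF0 : F 0 = s ^ m • q 0 (v 0) := by
        rw [hF]
        dsimp only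
        norm_num
      rw [hw, hFm1, hF0]
      rw [hd]
      simp only [LinearMap.sub_apply, Module.End.one_apply, LinearMap.smul_apply]
      rw [zero_sub]
      abel
    · rw [hDApp, if_neg hi, hu, if_neg hi, hnEApp, if_neg hi, add_zero, hw]
  -- nilpotency of nE
  have hjne : ∀ j : ℕ, j ∈ Finset.Ico 1 m → ((j : ℕ) : ZMod m) ≠ 0 := by
    intro j hj
    obtain ⟨hj1, hj2⟩ := Finset.mem_Ico.mp hj
    rw [Ne, ZMod.natCast_eq_zero_iff]
    intro hdvd
    have := Nat.le_of_dvd (by omega) hdvd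
    omega
  have hnE2 : nE * nE = 0 := by
    apply LinearMap.ext
    intro v
    funext i
    rw [Module.End.mul_apply, hnEApp]
    by_cases hi : i = 0
    · rw [if_pos hi, hEsumApp]
      rw [LinearMap.zero_apply]
      have : ∀ j ∈ Finset.Ico 1 m,
          s ^ (m - j) • q j (nE v ((j : ℕ) : ZMod m)) = 0 := by
        intro j hj
        rw [hnEApp, if_neg (hjne j hj), map_zero, smul_zero]
      rw [Finset.sum_congr rfl this, Finset.sum_const_zero]
      rfl
    · rw [if_neg hi]
      rfl
  -- nilpotency of N
  have hvalsub : ∀ i : ZMod m, i ≠ 0 → (i - 1).val = i.val - 1 := by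
    intro i hi
    have h1 : i.val ≠ 0 := fun h => hi ((ZMod.val_eq_zero i).mp h)
    have h2 : ((i.val - 1 : ℕ) : ZMod m) = i - 1 := by
      push_cast [Nat.cast_sub (Nat.one_le_iff_ne_zero.mpr h1), ZMod.natCast_zmod_val]
      ring
    rw [← h2, ZMod.val_cast_of_lt]
    exact lt_of_le_of_lt (Nat.sub_le _ _) (ZMod.val_lt i)
  have hNnil : IsNilpotent N := by
    have hclaim : ∀ k : ℕ, ∀ (v : ZMod m → V) (i : ZMod m), i.val < k → (N ^ k) v i = 0 := by
      intro k
      induction k with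
      | zero => intro v i h; omega
      | succ k ih =>
        intro v i h
        rw [pow_succ', Module.End.mul_apply, hNApp]
        by_cases hi : i = 0
        · rw [if_pos hi]
        · rw [if_neg hi]
          have hval : (i - 1).val < k := by
            have := hvalsub i hi
            have h1 : i.val ≠ 0 := fun h0 => hi ((ZMod.val_eq_zero i).mp h0)
            omega
          rw [ih v (i - 1) hval, map_zero, smul_zero]
    refine ⟨m, ?_⟩
    apply LinearMap.ext
    intro v
    funext i
    rw [LinearMap.zero_apply]
    exact hclaim m v i (ZMod.val_lt i)
  -- determinant of D
  have hDdet : LinearMap.det D = LinearMap.det d := by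
    set e : (ZMod m → V) ≃ₗ[K] V × ({ i : ZMod m // i ≠ 0 } → V) :=
      piSplitAux K V (ZMod m) 0 with he
    have hDconj : D = (e.symm : V × ({ i : ZMod m // i ≠ 0 } → V) →ₗ[K] (ZMod m → V)) ∘ₗ
        (d.prodMap (LinearMap.id : ({ i : ZMod m // i ≠ 0 } → V) →ₗ[K] _)) ∘ₗ
        (e : (ZMod m → V) →ₗ[K] V × ({ i : ZMod m // i ≠ 0 } → V)) := by
      apply LinearMap.ext
      intro v
      funext i
      rw [hDApp]
      by_cases hi : i = 0
      · subst hi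
        simp [he, piSplitAux]
      · simp [he, piSplitAux, hi]
    rw [hDconj]
    rw [show (e.symm : V × ({ i : ZMod m // i ≠ 0 } → V) →ₗ[K] (ZMod m → V)) ∘ₗ
        (d.prodMap (LinearMap.id : ({ i : ZMod m // i ≠ 0 } → V) →ₗ[K] _)) ∘ₗ
        (e : (ZMod m → V) →ₗ[K] V × ({ i : ZMod m // i ≠ 0 } → V))
      = (e.symm : V × ({ i : ZMod m // i ≠ 0 } → V) →ₗ[K] (ZMod m → V)) ∘ₗ
        (d.prodMap (LinearMap.id : ({ i : ZMod m // i ≠ 0 } → V) →ₗ[K] _)) ∘ₗ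
        (e.symm.symm : (ZMod m → V) →ₗ[K] V × ({ i : ZMod m // i ≠ 0 } → V)) from by
        rw [LinearEquiv.symm_symm]]
    rw [LinearMap.det_conj (d.prodMap (LinearMap.id : ({ i : ZMod m // i ≠ 0 } → V) →ₗ[K] _))
      e.symm]
    rw [LinearMap.det_prodMap_aux, LinearMap.det_id, mul_one]
  -- assemble
  have hdet := congrArg LinearMap.det hkey
  rw [LinearMap.det_comp, LinearMap.det_comp] at hdet
  have h1 : LinearMap.det ((1 : Module.End K (ZMod m → V)) + nE) = 1 :=
    LinearMap.det_one_add_of_isNilpotent_aux ⟨2, by rw [pow_two]; exact hnE2⟩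
  have h2 : LinearMap.det ((1 : Module.End K (ZMod m → V)) - N) = 1 := by
    rw [sub_eq_add_neg]
    exact LinearMap.det_one_add_of_isNilpotent_aux hNnil.neg
  rw [h1, one_mul, h2, mul_one, hDdet] at hdet
  rw [hdet, hd, hq0]
  have hlist : ((do let a ← (List.range m).reverse; pure ((a : ℕ) : ZMod m)) : List (ZMod m))
      = List.map (fun a : ℕ => (a : ZMod m)) (List.range m).reverse := by
    induction (List.range m).reverse with
    | nil => rfl
    | cons a l ih => simpa [List.flatMap_cons] using congrArg (List.cons ((a : ZMod m))) ih
  rw [hlist, List.map_map]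
  rfl
end

section
/- tr(T) = tr(f_{m−1} ∘ f_{m−2} ∘ ⋯ ∘ f_0). -/
/-!
Fix a basis `b` of `V` indexed by `ι`. In the product basis `⊗ᵢ b (κ i)` of `V^{⊗m}`, the
diagonal coefficient of `T` at `κ : ZMod m → ι` is `∏ᵢ (f (i - 1)) (κ i) (κ (i - 1))`, so `tr T`
is the sum, over all closed paths `κ` of length `m` in `ι`, of the products of matrix entries of
the `fᵢ` along the path. Expanding the matrix product `f_{m-1} ⋯ f_0` gives the same sum.
-/

open scoped TensorProduct

namespace Matrix

variable {α R : Type*} [Fintype α] [DecidableEq α] [CommSemiring R]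

theorem mul_list_prod_range_reverse_apply (A : ℕ → Matrix α α R) :
    ∀ (n : ℕ) (M : Matrix α α R) (a b : α),
      (M * ((List.range n).reverse.map A).prod) a b =
        ∑ q : Fin n → α, M a ((Fin.cons b q : Fin (n + 1) → α) (Fin.last n)) *
          ∏ j : Fin n, A j (q j) ((Fin.cons b q : Fin (n + 1) → α) j.castSucc)
  | 0, M, a, b => by simp
  | n + 1, M, a, b => by
    rw [List.range_succ, List.reverse_append, List.map_append, List.prod_append]
    simp only [List.reverse_singleton, List.map_singleton, List.prod_singleton, ← Matrix.mul_assoc]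
    rw [mul_list_prod_range_reverse_apply A n, ← (Fin.snocEquiv fun _ => α).sum_comp,
      Fintype.sum_prod_type, Finset.sum_comm]
    refine Finset.sum_congr rfl fun q _ => ?_
    rw [Matrix.mul_apply, Finset.sum_mul]
    refine Finset.sum_congr rfl fun c _ => ?_
    simp only [Fin.snocEquiv, Equiv.coe_fn_mk, Fin.prod_univ_castSucc, Fin.cons_snoc_eq_snoc_cons,
      Fin.snoc_last, Fin.snoc_castSucc, Fin.val_castSucc, Fin.val_last]
    ring

theorem trace_list_prod_range_reverse (A : ℕ → Matrix α α R) (n : ℕ) :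
    trace ((List.range (n + 1)).reverse.map A).prod =
      ∑ κ : Fin (n + 1) → α, ∏ j : Fin (n + 1), A j (κ (j + 1)) (κ j) := by
  rw [List.range_succ, List.reverse_append, List.map_append, List.prod_append]
  simp only [List.reverse_singleton, List.map_singleton, List.prod_singleton, trace, diag_apply,
    mul_list_prod_range_reverse_apply, ← (Fin.consEquiv fun _ => α).sum_comp, Fintype.sum_prod_type]
  refine Finset.sum_congr rfl fun b _ => Finset.sum_congr rfl fun q _ => ?_
  simp only [Fin.consEquiv, Equiv.coe_fn_mk, Fin.prod_univ_castSucc, Fin.coeSucc_eq_succ,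
    Fin.last_add_one, Fin.cons_succ, Fin.cons_zero, Fin.val_castSucc, Fin.val_last]
  ring

theorem trace_list_prod_range_reverse_zmod {m : ℕ} [NeZero m] (A : ZMod m → Matrix α α R) :
    trace ((List.range m).reverse.map fun i : ℕ => A i).prod =
      ∑ κ : ZMod m → α, ∏ i, A i (κ (i + 1)) (κ i) := by
  obtain ⟨n, rfl⟩ : ∃ n, m = n + 1 := Nat.exists_eq_add_one.mpr (Nat.pos_of_neZero m)
  rw [trace_list_prod_range_reverse]
  -- `ZMod (n + 1)` is `Fin (n + 1)` by definition.
  refine Fintype.sum_congr _ _ fun κ => Fintype.prod_congr _ _ fun j => ?_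
  exact congrArg (fun i => A i (κ (j + 1)) (κ j)) (Fin.cast_val_eq_self j)

end Matrix

open PiTensorProduct in
theorem LinearMap.trace_eq_sum_prod_of_tprod {K V ι s : Type*} [CommRing K] [AddCommGroup V]
    [Module K V] [Fintype ι] [DecidableEq ι] [Fintype s] [DecidableEq s] (b : Module.Basis ι K V)
    (g : s → Module.End K V) (e : s → s) (T : Module.End K (⨂[K] _ : s, V))
    (hT : ∀ v : s → V, T (⨂ₜ[K] i, v i) = ⨂ₜ[K] i, g i (v (e i))) :
    LinearMap.trace K _ T = ∑ κ : s → ι, ∏ i, toMatrixAlgEquiv b (g i) (κ i) (κ (e i)) := by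
  rw [LinearMap.trace_eq_matrix_trace K (Basis.piTensorProduct fun _ => b), Matrix.trace]
  refine Fintype.sum_congr _ _ fun κ => ?_
  simp [LinearMap.toMatrix_apply, hT, LinearMap.toMatrixAlgEquiv_apply]

/-- Let `V` be a finite-dimensional vector space over a field `K`, `m ≥ 1`, and
`f_0, …, f_{m−1} ∈ End_K(V)`.  Let `T` be the twisted cyclic rotation of
`V^{⊗m}` determined on elementary tensors by
`T(v_0 ⊗ ⋯ ⊗ v_{m−1}) = f_{m−1}(v_{m−1}) ⊗ f_0(v_0) ⊗ ⋯ ⊗ f_{m−2}(v_{m−2})`.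
Then `tr(T) = tr(f_{m−1} ∘ f_{m−2} ∘ ⋯ ∘ f_0)`. -/
theorem trace_twisted_cyclic_rotation
    (K : Type*) [Field K] (V : Type*) [AddCommGroup V] [Module K V]
    [FiniteDimensional K V] (m : ℕ) [NeZero m]
    (f : ZMod m → Module.End K V)
    (T : Module.End K (⨂[K] (_i : ZMod m), V))
    (hT : ∀ v : ZMod m → V,
      T (⨂ₜ[K] i, v i) = ⨂ₜ[K] i, f (i - 1) (v (i - 1))) :
    LinearMap.trace K (⨂[K] (_i : ZMod m), V) T =
      LinearMap.trace K V
        (((List.range m).reverse.map fun i => f (i : ZMod m)).prod) := by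
  let b := Module.finBasis K V
  let A : ZMod m → Matrix _ _ K := fun i => LinearMap.toMatrixAlgEquiv b (f i)
  calc LinearMap.trace K _ T
      = ∑ κ : ZMod m → _, ∏ i, A (i - 1) (κ i) (κ (i - 1)) :=
        LinearMap.trace_eq_sum_prod_of_tprod b _ _ T hT
    _ = ∑ κ : ZMod m → _, ∏ i, A i (κ (i + 1)) (κ i) :=
        Fintype.sum_congr _ _ fun κ =>
          Fintype.prod_equiv (Equiv.subRight 1) _ _ fun i => by simp
    _ = Matrix.trace ((List.range m).reverse.map fun i : ℕ => A i).prod :=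
        (Matrix.trace_list_prod_range_reverse_zmod A).symm
    _ = _ := by
      -- `fun i => f (i : ZMod m)` elaborates by coercing `List.range m` to `List (ZMod m)` via `bind`
      rw [LinearMap.trace_eq_matrix_trace K b, bind_pure_comp, List.map_eq_map, List.map_map]
      change _ = Matrix.trace (LinearMap.toMatrixAlgEquiv b _)
      rw [map_list_prod, List.map_map]
      rfl
end
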